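/- arXiv:1511.07842 — 5 statements merged into one kernel-verified Lean document; each statement's English description precedes it below -/
import Mathlib

section
/- For every natural number n ≥ 1, the integer complexity f(n) satisfies f(n) ≥ 3·log₃(n). -/
lemma key_logb (x : ℝ) (k : ℕ) (hx : 0 < x) (h : x ^ 3 ≤ 3 ^ k) :
    3 * Real.logb 3 x ≤ k := by
  have h1 : Real.logb 3 (x ^ 3) ≤ Real.logb 3 ((3 : ℝ) ^ k) :=
    Real.logb_le_logb_of_le (by norm_num) (by positivity) h
  rw [Real.logb_pow, Real.logb_pow, Real.logb_self_eq_one (by norm_num)] at h1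
  push_cast at h1 ⊢
  linarith

theorem integer_complexity_lower_bound
    (f : ℕ → ℕ) (hf1 : f 1 = 1)
    (hf : ∀ n : ℕ, 2 ≤ n →
      f n = sInf {m : ℕ | ∃ a b : ℕ, a < n ∧ b < n ∧ (a * b = n ∨ a + b = n) ∧ m = f a + f b}) :
    ∀ n : ℕ, 1 ≤ n → 3 * Real.logb 3 n ≤ (f n : ℝ) := by
  have hf2 : f 2 = 2 := by
    rw [hf 2 (by norm_num)]
    have hset : {m : ℕ | ∃ a b : ℕ, a < 2 ∧ b < 2 ∧ (a * b = 2 ∨ a + b = 2) ∧ m = f a + f b}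
        = {2} := by
      ext m
      simp only [Set.mem_setOf_eq, Set.mem_singleton_iff]
      constructor
      · rintro ⟨a, b, ha, hb, h, rfl⟩
        interval_cases a <;> interval_cases b <;> simp_all [hf1] <;> omega
      · rintro rfl
        exact ⟨1, 1, by norm_num, by norm_num, Or.inr rfl, by rw [hf1]⟩
    rw [hset]
    simp
  have hf3 : f 3 = 3 := by
    rw [hf 3 (by norm_num)]
    have hset : {m : ℕ | ∃ a b : ℕ, a < 3 ∧ b < 3 ∧ (a * b = 3 ∨ a + b = 3) ∧ m = f a + f b}
        = {3} := by
      ext m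
      simp only [Set.mem_setOf_eq, Set.mem_singleton_iff]
      constructor
      · rintro ⟨a, b, ha, hb, h, rfl⟩
        interval_cases a <;> interval_cases b <;> simp_all [hf1, hf2] <;> omega
      · rintro rfl
        exact ⟨1, 2, by norm_num, by norm_num, Or.inr rfl, by rw [hf1, hf2]⟩
    rw [hset]
    simp
  -- Key: n^3 ≤ 3^(f n) for all n ≥ 1
  have cube : ∀ n : ℕ, 1 ≤ n → n ^ 3 ≤ 3 ^ (f n) := by
    intro n
    induction n using Nat.strong_induction_on with
    | _ n ih =>
      intro hn
      match n, hn with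
      | 1, _ => rw [hf1]; norm_num
      | 2, _ => rw [hf2]; norm_num
      | 3, _ => rw [hf3]
      | (m + 4), _ =>
        set n := m + 4 with hn4
        have hmem : f n ∈ {k : ℕ | ∃ a b : ℕ, a < n ∧ b < n ∧
            (a * b = n ∨ a + b = n) ∧ k = f a + f b} := by
          rw [hf n (by omega)]
          exact Nat.sInf_mem ⟨f 1 + f (n - 1), 1, n - 1, by omega, by omega,
            Or.inr (by omega), rfl⟩
        obtain ⟨a, b, ha, hb, hab, hval⟩ := hmem
        rcases hab with hmul | hadd
        · -- multiplication case: a, b ≥ 2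
          have ha2 : 2 ≤ a := by
            rcases Nat.lt_or_ge a 2 with h | h
            · interval_cases a <;> omega
            · exact h
          have hb2 : 2 ≤ b := by
            rcases Nat.lt_or_ge b 2 with h | h
            · interval_cases b <;> omega
            · exact h
          have iha := ih a ha (by omega)
          have ihb := ih b hb (by omega)
          calc n ^ 3 = a ^ 3 * b ^ 3 := by rw [← hmul]; ring
            _ ≤ 3 ^ (f a) * 3 ^ (f b) := Nat.mul_le_mul iha ihb
            _ = 3 ^ (f a + f b) := (pow_add 3 (f a) (f b)).symm
            _ = 3 ^ (f n) := by rw [hval]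
        · -- addition case
          have ha1 : 1 ≤ a := by omega
          have hb1 : 1 ≤ b := by omega
          rcases Nat.lt_or_ge a 2 with haa | haa
          · -- a = 1
            have haeq : a = 1 := by omega
            have hbeq : b = n - 1 := by omega
            have hb3 : 3 ≤ b := by omega
            have ihb := ih b hb hb1
            have hstep : n ^ 3 ≤ 3 * b ^ 3 := by
              have : n = b + 1 := by omega
              rw [this]
              nlinarith [hb3, sq_nonneg b]
            calc n ^ 3 ≤ 3 * b ^ 3 := hstep
              _ ≤ 3 * 3 ^ (f b) := by omega
              _ = 3 ^ (1 + f b) := by rw [pow_add]; ring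
              _ = 3 ^ (f n) := by rw [hval, haeq, hf1]
          · rcases Nat.lt_or_ge b 2 with hbb | hbb
            · -- b = 1
              have hbeq : b = 1 := by omega
              have ha3 : 3 ≤ a := by omega
              have iha := ih a ha ha1
              have hstep : n ^ 3 ≤ 3 * a ^ 3 := by
                have : n = a + 1 := by omega
                rw [this]
                nlinarith [ha3, sq_nonneg a]
              calc n ^ 3 ≤ 3 * a ^ 3 := hstep
                _ ≤ 3 * 3 ^ (f a) := by omega
                _ = 3 ^ (f a + 1) := by rw [pow_add]; ring
                _ = 3 ^ (f n) := by rw [hval, hbeq, hf1]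
            · -- a, b ≥ 2
              have iha := ih a ha ha1
              have ihb := ih b hb hb1
              have hle : n ≤ a * b := by nlinarith
              calc n ^ 3 ≤ (a * b) ^ 3 := Nat.pow_le_pow_left hle 3
                _ = a ^ 3 * b ^ 3 := by ring
                _ ≤ 3 ^ (f a) * 3 ^ (f b) := Nat.mul_le_mul iha ihb
                _ = 3 ^ (f a + f b) := (pow_add 3 (f a) (f b)).symm
                _ = 3 ^ (f n) := by rw [hval]
  intro n hn
  have h := cube n hn
  have hcast : (n : ℝ) ^ 3 ≤ (3 : ℝ) ^ (f n) := by exact_mod_cast h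
  exact key_logb n (f n) (by exact_mod_cast hn) hcast
end

section
/- For every natural number k ≥ 1, f(3^k) = 3k, where f is integer complexity. -/
def gE : ℕ → ℕ
  | 0 => 0
  | 1 => 1
  | 2 => 2
  | 3 => 3
  | 4 => 4
  | (n+5) => 3 * gE (n+2)

lemma gE_succ5 (n : ℕ) : gE (n+5) = 3 * gE (n+2) := rfl

lemma gE_add : ∀ n s t : ℕ, s + t = n → gE s + gE t ≤ gE n := by
  intro n
  induction n using Nat.strong_induction_on with
  | _ n ih =>
    intro s t hst
    subst hst
    by_cases hs : 5 ≤ s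
    · obtain ⟨m, rfl⟩ : ∃ m, s = m + 5 := ⟨s - 5, by omega⟩
      have e : m + 5 + t = (m + t + 2) + 3 := by omega
      have e2 : (m + t + 2) + 3 = (m + t) + 5 := by omega
      rw [e, e2, gE_succ5, gE_succ5]
      have h := ih (m + 2 + t) (by omega) (m + 2) t rfl
      have e3 : m + 2 + t = m + t + 2 := by omega
      rw [e3] at h
      omega
    · by_cases ht : 5 ≤ t
      · obtain ⟨m, rfl⟩ : ∃ m, t = m + 5 := ⟨t - 5, by omega⟩
        have e : s + (m + 5) = (s + m) + 5 := by omega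
        rw [e, gE_succ5, gE_succ5]
        have h := ih (s + (m + 2)) (by omega) s (m + 2) rfl
        have e3 : s + (m + 2) = s + m + 2 := by omega
        rw [e3] at h
        omega
      · interval_cases s <;> interval_cases t <;> decide

lemma gE_mul : ∀ n s t : ℕ, s + t = n → gE s * gE t ≤ gE n := by
  intro n
  induction n using Nat.strong_induction_on with
  | _ n ih =>
    intro s t hst
    subst hst
    by_cases hs : 5 ≤ s
    · obtain ⟨m, rfl⟩ : ∃ m, s = m + 5 := ⟨s - 5, by omega⟩
      have h := ih (m + 2 + t) (by omega) (m + 2) t rfl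
      calc gE (m + 5) * gE t = 3 * (gE (m + 2) * gE t) := by rw [gE_succ5]; ring
        _ ≤ 3 * gE (m + 2 + t) := Nat.mul_le_mul (le_refl 3) h
        _ = gE (m + 5 + t) := by
            have e : m + 5 + t = (m + 2 + t) + 3 := by omega
            have e2 : (m + 2 + t) + 3 = (m + t) + 5 := by omega
            have e3 : m + 2 + t = (m + t) + 2 := by omega
            rw [e, e2, gE_succ5, e3]
    · by_cases ht : 5 ≤ t
      · obtain ⟨m, rfl⟩ : ∃ m, t = m + 5 := ⟨t - 5, by omega⟩
        have h := ih (s + (m + 2)) (by omega) s (m + 2) rfl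
        calc gE s * gE (m + 5) = 3 * (gE s * gE (m + 2)) := by rw [gE_succ5]; ring
          _ ≤ 3 * gE (s + (m + 2)) := Nat.mul_le_mul (le_refl 3) h
          _ = gE (s + (m + 5)) := by
              have e : s + (m + 5) = (s + m + 2) + 3 := by omega
              have e2 : (s + m + 2) + 3 = (s + m) + 5 := by omega
              have e3 : s + (m + 2) = (s + m) + 2 := by omega
              rw [e, e2, gE_succ5, e3]
      · interval_cases s <;> interval_cases t <;> decide

lemma gE_cube : ∀ m : ℕ, 2 * gE m ^ 3 ≤ 3 ^ (m + 1) := by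
  intro m
  induction m using Nat.strong_induction_on with
  | _ m ih =>
    by_cases hm : 5 ≤ m
    · obtain ⟨p, rfl⟩ : ∃ p, m = p + 5 := ⟨m - 5, by omega⟩
      have h := ih (p + 2) (by omega)
      calc 2 * gE (p + 5) ^ 3 = 27 * (2 * gE (p + 2) ^ 3) := by rw [gE_succ5]; ring
        _ ≤ 27 * 3 ^ (p + 3) := Nat.mul_le_mul (le_refl 27) h
        _ = 3 ^ (p + 5 + 1) := by ring
    · interval_cases m <;> decide

lemma lower (f : ℕ → ℕ) (hf1 : f 1 = 1)
    (hf : ∀ n : ℕ, 2 ≤ n →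
      f n = sInf {m : ℕ | ∃ a b : ℕ, a < n ∧ b < n ∧ (a * b = n ∨ a + b = n) ∧ m = f a + f b}) :
    ∀ n, 1 ≤ n → n ≤ gE (f n) := by
  intro n
  induction n using Nat.strong_induction_on with
  | _ n ih =>
    intro hn
    rcases eq_or_lt_of_le hn with h1 | h2
    · rw [← h1, hf1]; decide
    · have h2' : 2 ≤ n := h2
      have hS : {m : ℕ | ∃ a b : ℕ, a < n ∧ b < n ∧ (a * b = n ∨ a + b = n) ∧ m = f a + f b}.Nonempty :=
        ⟨f 1 + f (n - 1), 1, n - 1, by omega, by omega, Or.inr (by omega), rfl⟩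
      have hmem := Nat.sInf_mem hS
      obtain ⟨a, b, ha, hb, hc, heq⟩ := hmem
      have hfn : f n = f a + f b := by rw [hf n h2']; exact heq
      have ha1 : 1 ≤ a := by
        rcases hc with h | h
        · rcases Nat.eq_zero_or_pos a with rfl | h'
          · simp at h; omega
          · exact h'
        · omega
      have hb1 : 1 ≤ b := by
        rcases hc with h | h
        · rcases Nat.eq_zero_or_pos b with rfl | h'
          · simp at h; omega
          · exact h'
        · omega
      have iha := ih a ha ha1
      have ihb := ih b hb hb1
      rw [hfn]
      rcases hc with h | h
      · calc n = a * b := h.symm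
          _ ≤ gE (f a) * gE (f b) := Nat.mul_le_mul iha ihb
          _ ≤ gE (f a + f b) := gE_mul _ _ _ rfl
      · calc n = a + b := h.symm
          _ ≤ gE (f a) + gE (f b) := Nat.add_le_add iha ihb
          _ ≤ gE (f a + f b) := gE_add _ _ _ rfl

lemma f_two (f : ℕ → ℕ) (hf1 : f 1 = 1)
    (hf : ∀ n : ℕ, 2 ≤ n →
      f n = sInf {m : ℕ | ∃ a b : ℕ, a < n ∧ b < n ∧ (a * b = n ∨ a + b = n) ∧ m = f a + f b}) :
    f 2 = 2 := by
  rw [hf 2 (le_refl 2)]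
  have h : {m : ℕ | ∃ a b : ℕ, a < 2 ∧ b < 2 ∧ (a * b = 2 ∨ a + b = 2) ∧ m = f a + f b} = {2} := by
    ext m
    simp only [Set.mem_setOf_eq, Set.mem_singleton_iff]
    constructor
    · rintro ⟨a, b, ha, hb, hc, rfl⟩
      interval_cases a <;> interval_cases b <;> simp_all <;> omega
    · rintro rfl
      exact ⟨1, 1, by omega, by omega, Or.inr rfl, by rw [hf1]⟩
  rw [h, csInf_singleton]

lemma f_three (f : ℕ → ℕ) (hf1 : f 1 = 1)
    (hf : ∀ n : ℕ, 2 ≤ n →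
      f n = sInf {m : ℕ | ∃ a b : ℕ, a < n ∧ b < n ∧ (a * b = n ∨ a + b = n) ∧ m = f a + f b}) :
    f 3 = 3 := by
  have h2 := f_two f hf1 hf
  rw [hf 3 (by omega)]
  have h : {m : ℕ | ∃ a b : ℕ, a < 3 ∧ b < 3 ∧ (a * b = 3 ∨ a + b = 3) ∧ m = f a + f b} = {3} := by
    ext m
    simp only [Set.mem_setOf_eq, Set.mem_singleton_iff]
    constructor
    · rintro ⟨a, b, ha, hb, hc, rfl⟩
      interval_cases a <;> interval_cases b <;> simp_all <;> omega
    · rintro rfl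
      exact ⟨1, 2, by omega, by omega, Or.inr rfl, by rw [hf1, h2]⟩
  rw [h, csInf_singleton]

lemma upper (f : ℕ → ℕ) (hf1 : f 1 = 1)
    (hf : ∀ n : ℕ, 2 ≤ n →
      f n = sInf {m : ℕ | ∃ a b : ℕ, a < n ∧ b < n ∧ (a * b = n ∨ a + b = n) ∧ m = f a + f b}) :
    ∀ k : ℕ, 1 ≤ k → f (3 ^ k) ≤ 3 * k := by
  intro k hk
  induction k with
  | zero => omega
  | succ k ihk =>
    rcases Nat.eq_zero_or_pos k with rfl | hk1
    · simpa using (f_three f hf1 hf).le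
    · have hkk := ihk hk1
      have h2 : (2 : ℕ) ≤ 3 ^ (k + 1) := by
        have : (3 : ℕ) ^ 1 ≤ 3 ^ (k + 1) := Nat.pow_le_pow_right (by omega) (by omega)
        omega
      rw [hf _ h2]
      have hmem : f 3 + f (3 ^ k) ∈
          {m : ℕ | ∃ a b : ℕ, a < 3 ^ (k + 1) ∧ b < 3 ^ (k + 1) ∧
            (a * b = 3 ^ (k + 1) ∨ a + b = 3 ^ (k + 1)) ∧ m = f a + f b} := by
        refine ⟨3, 3 ^ k, ?_, ?_, Or.inl ?_, rfl⟩
        · have : (3 : ℕ) ^ 1 < 3 ^ (k + 1) := Nat.pow_lt_pow_right (by omega) (by omega)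
          simpa using this
        · exact Nat.pow_lt_pow_right (by omega) (by omega)
        · rw [pow_succ]; ring
      calc sInf _ ≤ f 3 + f (3 ^ k) := Nat.sInf_le hmem
        _ ≤ 3 + 3 * k := by rw [f_three f hf1 hf]; omega
        _ = 3 * (k + 1) := by ring

theorem integer_complexity_pow_three
    (f : ℕ → ℕ) (hf1 : f 1 = 1)
    (hf : ∀ n : ℕ, 2 ≤ n →
      f n = sInf {m : ℕ | ∃ a b : ℕ, a < n ∧ b < n ∧ (a * b = n ∨ a + b = n) ∧ m = f a + f b}) :
    ∀ k : ℕ, 1 ≤ k → f (3 ^ k) = 3 * k := by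
  intro k hk
  have hup := upper f hf1 hf k hk
  have hlo : 3 ^ k ≤ gE (f (3 ^ k)) :=
    lower f hf1 hf (3 ^ k) (Nat.one_le_pow _ _ (by omega))
  have hcube := gE_cube (f (3 ^ k))
  by_contra hne
  have hlt : f (3 ^ k) + 1 ≤ 3 * k := by omega
  have h1 : 2 * (3 ^ k) ^ 3 ≤ 2 * gE (f (3 ^ k)) ^ 3 :=
    Nat.mul_le_mul (le_refl 2) (Nat.pow_le_pow_left hlo 3)
  have h2 : (3 : ℕ) ^ (f (3 ^ k) + 1) ≤ 3 ^ (3 * k) := Nat.pow_le_pow_right (by omega) hlt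
  have e : ((3 : ℕ) ^ k) ^ 3 = 3 ^ (3 * k) := by
    rw [← pow_mul]; ring_nf
  have : 2 * 3 ^ (3 * k) ≤ 3 ^ (3 * k) := by
    rw [← e]; omega
  have hpos : 0 < (3 : ℕ) ^ (3 * k) := Nat.pow_pos (by omega)
  omega
end

section
/- If n is a natural number with n ≥ 2 and n is not a power of 3, then f(n) > 3·log₃(n). -/
private def E : ℕ → ℕ
  | 0 => 1
  | 1 => 1
  | 2 => 2
  | 3 => 3
  | 4 => 4
  | (k+5) => 3 * E (k+2)

private lemma E_step : ∀ k, E k ≤ E (k+1) := by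
  intro k
  induction k using Nat.strong_induction_on with
  | _ k ih =>
    match k with
    | 0 => simp [E]
    | 1 => simp [E]
    | 2 => simp [E]
    | 3 => simp [E]
    | 4 => show E 4 ≤ E 5; simp [E]
    | (k+5) =>
      show 3 * E (k+2) ≤ 3 * E (k+3)
      have h := ih (k+2) (by omega)
      have h' : E (k+2+1) = E (k+3) := rfl
      omega

private lemma E_mono : Monotone E := monotone_nat_of_le_succ E_step

private lemma E_pos : ∀ k, 1 ≤ E k := by
  intro k
  have := E_mono (Nat.zero_le k)
  simpa [E] using this

private lemma E_two_le (k : ℕ) (hk : 2 ≤ k) : 2 ≤ E k := by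
  have := E_mono hk
  simpa [E] using this

private lemma E_mul3 : ∀ k, 3 * E k ≤ E (k+3) := by
  intro k
  match k with
  | 0 => simp [E]
  | 1 => show 3 * E 1 ≤ E 4; simp [E]
  | (k+2) => show 3 * E (k+2) ≤ E (k+5); simp [E]

private lemma E_mul3_eq : ∀ k, 2 ≤ k → E (k+3) = 3 * E k := by
  intro k hk
  match k with
  | (k+2) => show E (k+5) = 3 * E (k+2); simp [E]

private lemma E_two_mul : ∀ k, 2 * E k ≤ E (k+2) := by
  intro k
  induction k using Nat.strong_induction_on with
  | _ k ih =>
    match k with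
    | 0 => simp [E]
    | 1 => show 2 * E 1 ≤ E 3; simp [E]
    | 2 => show 2 * E 2 ≤ E 4; simp [E]
    | 3 => show 2 * E 3 ≤ E 5; simp [E]
    | 4 => show 2 * E 4 ≤ E 6; simp [E]
    | (k+5) =>
      show 2 * (3 * E (k+2)) ≤ E (k+7)
      have h1 := ih (k+2) (by omega)
      have h2 : E (k+7) = 3 * E (k+4) := E_mul3_eq (k+4) (by omega)
      have h' : E (k+2+2) = E (k+4) := rfl
      omega

private lemma E_mul : ∀ j k, E j * E k ≤ E (j + k) := by
  intro j
  induction j using Nat.strong_induction_on with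
  | _ j ih =>
    intro k
    match j with
    | 0 => simp [E]
    | 1 => simpa [E] using E_mono (show k ≤ 1 + k by omega)
    | 2 => show 2 * E k ≤ E (2 + k); rw [Nat.add_comm]; exact E_two_mul k
    | 3 => show 3 * E k ≤ E (3 + k); rw [Nat.add_comm]; exact E_mul3 k
    | 4 =>
      show 4 * E k ≤ E (4 + k)
      have h1 := E_two_mul k
      have h2 := E_two_mul (k+2)
      have : 4 * E k ≤ 2 * E (k+2) := by omega
      calc 4 * E k ≤ 2 * E (k+2) := this
        _ ≤ E (k+4) := h2
        _ = E (4+k) := by ring_nf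
    | (j+5) =>
      show 3 * E (j+2) * E k ≤ E (j+5+k)
      have h1 := ih (j+2) (by omega) k
      have h2 := E_mul3 (j+2+k)
      calc 3 * E (j+2) * E k = 3 * (E (j+2) * E k) := by ring
        _ ≤ 3 * E (j+2+k) := by omega
        _ ≤ E (j+2+k+3) := h2
        _ = E (j+5+k) := by ring_nf

private lemma E_add_one : ∀ k, 1 ≤ k → E k + 1 ≤ E (k+1) := by
  intro k
  induction k using Nat.strong_induction_on with
  | _ k ih =>
    intro hk
    match k with
    | 1 => simp [E]
    | 2 => show E 2 + 1 ≤ E 3; simp [E]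
    | 3 => show E 3 + 1 ≤ E 4; simp [E]
    | 4 => show E 4 + 1 ≤ E 5; simp [E]
    | (k+5) =>
      show 3 * E (k+2) + 1 ≤ E (k+6)
      have h1 := ih (k+2) (by omega) (by omega)
      have h2 : E (k+6) = 3 * E (k+3) := E_mul3_eq (k+3) (by omega)
      have h' : E (k+2+1) = E (k+3) := rfl
      omega

private lemma E_add : ∀ j k, 1 ≤ j → 1 ≤ k → E j + E k ≤ E (j + k) := by
  intro j k hj hk
  rcases Nat.lt_or_ge j 2 with hj2 | hj2
  · have hj1 : j = 1 := by omega
    subst hj1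
    have := E_add_one k hk
    calc E 1 + E k = E k + 1 := by simp [E]; omega
      _ ≤ E (k+1) := this
      _ = E (1+k) := by ring_nf
  · rcases Nat.lt_or_ge k 2 with hk2 | hk2
    · have hk1 : k = 1 := by omega
      subst hk1
      have := E_add_one j hj
      calc E j + E 1 = E j + 1 := by simp [E]
        _ ≤ E (j+1) := this
    · have h1 : 2 ≤ E j := E_two_le j hj2
      have h2 : 2 ≤ E k := E_two_le k hk2
      calc E j + E k ≤ E j * E k := by nlinarith
        _ ≤ E (j + k) := E_mul j k

private lemma E_three_mul : ∀ m, E (3*m) = 3^m := by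
  intro m
  induction m using Nat.strong_induction_on with
  | _ m ih =>
    match m with
    | 0 => simp [E]
    | 1 => show E 3 = 3; simp [E]
    | (m+2) =>
      have h1 : E (3*(m+1)) = 3^(m+1) := ih (m+1) (by omega)
      have h2 : (3*(m+2)) = (3*(m+1)) + 3 := by ring
      rw [h2, E_mul3_eq (3*(m+1)) (by omega), h1]
      ring

private lemma E_cube : ∀ k, ¬ (3 ∣ k) → E k ^ 3 < 3 ^ k := by
  intro k
  induction k using Nat.strong_induction_on with
  | _ k ih =>
    intro hk
    match k with
    | 0 => exact absurd ⟨0, rfl⟩ hk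
    | 1 => norm_num [E]
    | 2 => norm_num [E]
    | 3 => exact absurd ⟨1, rfl⟩ hk
    | 4 => norm_num [E]
    | (k+5) =>
      have hk2 : ¬ (3 ∣ (k+2)) := by
        intro ⟨c, hc⟩; exact hk ⟨c+1, by omega⟩
      have h1 := ih (k+2) (by omega) hk2
      show (3 * E (k+2)) ^ 3 < 3 ^ (k+5)
      have : 3 ^ (k+5) = 27 * 3 ^ (k+2) := by ring
      rw [this]
      have : (3 * E (k+2)) ^ 3 = 27 * (E (k+2))^3 := by ring
      rw [this]
      omega

theorem integer_complexity_strict_lower_bound_non_power_of_three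
    (f : ℕ → ℕ) (hf1 : f 1 = 1)
    (hf : ∀ n : ℕ, 2 ≤ n →
      f n = sInf {m : ℕ | ∃ a b : ℕ, a < n ∧ b < n ∧ (a * b = n ∨ a + b = n) ∧ m = f a + f b}) :
    ∀ n : ℕ, 2 ≤ n → (¬ ∃ k : ℕ, n = 3 ^ k) → 3 * Real.logb 3 n < (f n : ℝ) := by
  -- main structural lemma
  have main : ∀ n : ℕ, 1 ≤ n → 1 ≤ f n ∧ n ≤ E (f n) := by
    intro n
    induction n using Nat.strong_induction_on with
    | _ n ih =>
      intro hn
      rcases Nat.lt_or_ge n 2 with h2 | h2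
      · have : n = 1 := by omega
        subst this
        simp [hf1, E]
      · -- the set is nonempty
        set S := {m : ℕ | ∃ a b : ℕ, a < n ∧ b < n ∧ (a * b = n ∨ a + b = n) ∧ m = f a + f b}
          with hS
        have hne : S.Nonempty := by
          refine ⟨f 1 + f (n-1), 1, n-1, by omega, by omega, Or.inr (by omega), rfl⟩
        have hmem : f n ∈ S := by
          rw [hf n h2]; exact Nat.sInf_mem hne
        obtain ⟨a, b, ha, hb, hab, heq⟩ := hmem
        have ha1 : 1 ≤ a := by
          rcases hab with h | h
          · rcases Nat.eq_zero_or_pos a with h0 | h0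
            · subst h0; simp at h; omega
            · exact h0
          · omega
        have hb1 : 1 ≤ b := by
          rcases hab with h | h
          · rcases Nat.eq_zero_or_pos b with h0 | h0
            · subst h0; simp at h; omega
            · exact h0
          · omega
        obtain ⟨hfa1, hfa2⟩ := ih a ha ha1
        obtain ⟨hfb1, hfb2⟩ := ih b hb hb1
        constructor
        · omega
        · rw [heq]
          rcases hab with h | h
          · calc n = a * b := h.symm
              _ ≤ E (f a) * E (f b) := Nat.mul_le_mul hfa2 hfb2
              _ ≤ E (f a + f b) := E_mul _ _
          · calc n = a + b := h.symm
              _ ≤ E (f a) + E (f b) := Nat.add_le_add hfa2 hfb2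
              _ ≤ E (f a + f b) := E_add _ _ hfa1 hfb1
  intro n hn hnp
  obtain ⟨hfn1, hfn2⟩ := main n (by omega)
  -- n^3 < 3^(f n) in ℕ
  have key : n ^ 3 < 3 ^ (f n) := by
    by_cases h3 : 3 ∣ f n
    · obtain ⟨m, hm⟩ := h3
      have hE : E (f n) = 3 ^ m := by rw [hm]; exact E_three_mul m
      have hne : n ≠ 3 ^ m := fun h => hnp ⟨m, h⟩
      have hlt : n < 3 ^ m := lt_of_le_of_ne (hE ▸ hfn2) hne
      calc n ^ 3 < (3 ^ m) ^ 3 := Nat.pow_lt_pow_left hlt (by norm_num)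
        _ = 3 ^ (f n) := by rw [hm]; ring
    · calc n ^ 3 ≤ E (f n) ^ 3 := Nat.pow_le_pow_left hfn2 3
        _ < 3 ^ (f n) := E_cube _ h3
  -- pass to reals
  have keyR : (n : ℝ) ^ 3 < (3 : ℝ) ^ (f n) := by exact_mod_cast key
  have hn0 : (0 : ℝ) < n := by positivity
  have h13 : (1 : ℝ) < 3 := by norm_num
  have hlog := Real.logb_lt_logb h13 (by positivity) keyR
  rw [Real.logb_pow, Real.logb_pow] at hlog
  simp [Real.logb_self_eq_one] at hlog
  exact_mod_cast hlog
end

section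
/- Let a ≥ 2 and let λ₀,…,λ_{k−1} be integers with 2 ≤ λᵢ and λᵢ | a, and let s₀,…,s_{k−1} be integers with 0 ≤ sᵢ ≤ a−1. Define n = λ₀(λ₁(⋯(λ_{k−1} + s_{k−1})⋯) + s₁) + s₀. Then λ₀λ₁⋯λ_{k−1} ≤ n < a · λ₀λ₁⋯λ_{k−1}. -/
/-- The nested value `λ₀(λ₁(⋯(λ_{k−1} + s_{k−1})⋯) + s₁) + s₀`. -/
def nestedVal (lam s : ℕ → ℕ) (k : ℕ) : ℕ :=
  (List.range k).foldr (fun i acc => lam i * acc + s i) 1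

lemma nestedVal_succ (lam s : ℕ → ℕ) (k : ℕ) :
    nestedVal lam s (k + 1) =
      lam 0 * nestedVal (fun i => lam (i + 1)) (fun i => s (i + 1)) k + s 0 := by
  unfold nestedVal
  rw [List.range_succ_eq_map]
  simp [List.foldr_map]

lemma nested_aux (a : ℕ) (ha : 2 ≤ a) :
    ∀ (k : ℕ) (lam s : ℕ → ℕ), (∀ i < k, 2 ≤ lam i) → (∀ i < k, s i ≤ a - 1) →
      (∏ i ∈ Finset.range k, lam i) ≤ nestedVal lam s k ∧
        nestedVal lam s k + (a - 1) ≤ a * ∏ i ∈ Finset.range k, lam i := by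
  intro k
  induction k with
  | zero =>
    intro lam s _ _
    simp [nestedVal]
    omega
  | succ k ih =>
    intro lam s hlam hs
    obtain ⟨h1, h2⟩ := ih (fun i => lam (i + 1)) (fun i => s (i + 1))
      (fun i hi => hlam (i + 1) (by omega)) (fun i hi => hs (i + 1) (by omega))
    rw [nestedVal_succ, Finset.prod_range_succ']
    have hl0 : 2 ≤ lam 0 := hlam 0 (by omega)
    have hs0 : s 0 ≤ a - 1 := hs 0 (by omega)
    constructor
    · calc (∏ i ∈ Finset.range k, lam (i + 1)) * lam 0
          ≤ nestedVal (fun i => lam (i + 1)) (fun i => s (i + 1)) k * lam 0 :=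
            Nat.mul_le_mul_right _ h1
        _ ≤ lam 0 * nestedVal (fun i => lam (i + 1)) (fun i => s (i + 1)) k + s 0 := by
            rw [mul_comm]; omega
    · set n' := nestedVal (fun i => lam (i + 1)) (fun i => s (i + 1)) k
      set P := ∏ i ∈ Finset.range k, lam (i + 1)
      calc lam 0 * n' + s 0 + (a - 1)
          ≤ lam 0 * n' + lam 0 * (a - 1) := by nlinarith
        _ = lam 0 * (n' + (a - 1)) := by ring
        _ ≤ lam 0 * (a * P) := Nat.mul_le_mul_left _ h2
        _ = a * (P * lam 0) := by ring

theorem nested_representation_bounds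
    (a k : ℕ) (ha : 2 ≤ a) (lam s : ℕ → ℕ)
    (hlam : ∀ i < k, 2 ≤ lam i) (hdvd : ∀ i < k, lam i ∣ a)
    (hs : ∀ i < k, s i ≤ a - 1) :
    (∏ i ∈ Finset.range k, lam i) ≤ nestedVal lam s k ∧
      nestedVal lam s k < a * ∏ i ∈ Finset.range k, lam i := by
  obtain ⟨h1, h2⟩ := nested_aux a ha k lam s hlam hs
  exact ⟨h1, by omega⟩
end

section
/- Let A be a base-a algorithm with dividing factor map Λ, and let G(A) be the directed graph on residues {0,…,a−1} with an edge (r₀,r₁) when some n₀ ≡ r₀ (mod a) is sent by one step to some n₁ ≡ r₁ (mod a). Then for every walk v₀, v₁, …, v_k on G(A) with v_k = 1, there exists a natural number n whose residue sequence under A is exactly v₀, v₁, …, v_k. -/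
/-- One step of a base-`a` algorithm with dividing-factor map `L`:
`n ↦ (n − s)/λ` where `r = n mod a`, `λ = L r`, `s = n mod λ`. -/
def stepFn (a : ℕ) (L : ℕ → ℕ) (n : ℕ) : ℕ :=
  (n - n % L (n % a)) / L (n % a)

/-- Edge relation of the directed graph `G(A)` on residues mod `a`. -/
def edgeRel (a : ℕ) (L : ℕ → ℕ) (r₀ r₁ : ℕ) : Prop :=
  ∃ n₀ : ℕ, n₀ % a = r₀ ∧ stepFn a L n₀ % a = r₁

lemma stepFn_eq_div (a : ℕ) (L : ℕ → ℕ) (hL2 : ∀ i, 2 ≤ L i) (n : ℕ) :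
    stepFn a L n = n / L (n % a) := by
  unfold stepFn
  have hl : 0 < L (n % a) := lt_of_lt_of_le two_pos (hL2 _)
  have h : n - n % L (n % a) = L (n % a) * (n / L (n % a)) := by
    have := Nat.div_add_mod n (L (n % a))
    omega
  rw [h, Nat.mul_div_cancel_left _ hl]

lemma backstep (a : ℕ) (L : ℕ → ℕ) (hL2 : ∀ i, 2 ≤ L i)
    (r₀ r₁ m : ℕ) (he : edgeRel a L r₀ r₁) (hm : m % a = r₁) :
    ∃ n, n % a = r₀ ∧ stepFn a L n = m := by
  obtain ⟨n₀, h0, h1⟩ := he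
  have hlpos : 0 < L r₀ := lt_of_lt_of_le two_pos (hL2 r₀)
  rw [stepFn_eq_div a L hL2, h0] at h1
  set l := L r₀ with hl
  set s := n₀ % l with hs
  set q := n₀ / l with hq
  refine ⟨l * m + s, ?_, ?_⟩
  · -- (l*m + s) % a = r₀
    have hmq : m ≡ q [MOD a] := by
      unfold Nat.ModEq
      rw [hm, h1]
    have h2 : l * m + s ≡ l * q + s [MOD a] :=
      Nat.ModEq.add_right s (Nat.ModEq.mul_left l hmq)
    have h3 : l * q + s = n₀ := Nat.div_add_mod n₀ l
    calc (l * m + s) % a = (l * q + s) % a := h2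
      _ = n₀ % a := by rw [h3]
      _ = r₀ := h0
  · -- stepFn (l*m+s) = m
    have hn : (l * m + s) % a = r₀ := by
      have hmq : m ≡ q [MOD a] := by
        unfold Nat.ModEq
        rw [hm, h1]
      have h2 : l * m + s ≡ l * q + s [MOD a] :=
        Nat.ModEq.add_right s (Nat.ModEq.mul_left l hmq)
      have h3 : l * q + s = n₀ := Nat.div_add_mod n₀ l
      calc (l * m + s) % a = (l * q + s) % a := h2
        _ = n₀ % a := by rw [h3]
        _ = r₀ := h0
    rw [stepFn_eq_div a L hL2, hn, ← hl]
    have hsl : s < l := Nat.mod_lt _ hlpos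
    rw [Nat.mul_add_div hlpos, Nat.div_eq_of_lt hsl, Nat.add_zero]

theorem walks_are_residue_sequences
    (a : ℕ) (ha : 2 ≤ a) (L : ℕ → ℕ)
    (hL2 : ∀ i, 2 ≤ L i) (hLd : ∀ i, L i ∣ a)
    (k : ℕ) (v : ℕ → ℕ)
    (hva : ∀ i ≤ k, v i < a) (hvk : v k = 1)
    (hwalk : ∀ i < k, edgeRel a L (v i) (v (i + 1))) :
    ∃ n : ℕ, (∀ i ≤ k, (stepFn a L)^[i] n % a = v i) ∧ (stepFn a L)^[k] n = 1 := by
  have key : ∀ d, d ≤ k →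
      ∃ n, (∀ i ≤ d, (stepFn a L)^[i] n % a = v (k - d + i)) ∧ (stepFn a L)^[d] n = 1 := by
    intro d
    induction d with
    | zero =>
      intro _
      refine ⟨1, ?_, rfl⟩
      intro i hi
      interval_cases i
      simp only [Function.iterate_zero, id_eq, Nat.add_zero, Nat.sub_zero]
      rw [Nat.mod_eq_of_lt (by omega), hvk]
    | succ d ih =>
      intro hd1
      obtain ⟨n, hn1, hn2⟩ := ih (Nat.le_of_succ_le hd1)
      have hlt : k - (d + 1) < k := by omega
      have hedge := hwalk (k - (d + 1)) hlt
      have hidx : k - (d + 1) + 1 = k - d := by omega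
      rw [hidx] at hedge
      have hmres : n % a = v (k - d) := by
        have := hn1 0 (Nat.zero_le d)
        simpa using this
      obtain ⟨n', hn'1, hn'2⟩ := backstep a L hL2 _ _ n hedge hmres
      refine ⟨n', ?_, ?_⟩
      · intro i hi
        cases i with
        | zero => simpa using hn'1
        | succ j =>
          have hj : j ≤ d := by omega
          have : (stepFn a L)^[j + 1] n' = (stepFn a L)^[j] n := by
            rw [Function.iterate_succ_apply, hn'2]
          rw [this, hn1 j hj]
          congr 1
          omega
      · rw [Function.iterate_succ_apply, hn'2, hn2]
  obtain ⟨n, h1, h2⟩ := key k le_rfl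
  refine ⟨n, ?_, h2⟩
  intro i hi
  have := h1 i hi
  rwa [Nat.sub_self, Nat.zero_add] at this
end
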